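/- arXiv:2304.02377 — 2 statements merged into one kernel-verified Lean document; each statement's English description precedes it below -/
import Mathlib

section
/- Let δ > 0, σ₁, σ₂ > 0, T > 0, and w₁, w₂ > 0, and set σ₁₂² = (σ₁²/(w₁T) + σ₂²/(w₂T)). Then for any real numbers a₁, a₂, the quantity (1/(σ₁₂²·T))·((1/2)·δ²/σ₁₂² + 1/2)·(σ₁²·a₁/w₁² + σ₂²·a₂/w₂²)² + (2/(σ₁₂²·T))·(σ₁²σ₂²/(w₁w₂))·(a₁/w₁ − a₂/w₂)² is nonnegative, and hence the function g(w₁, w₂) = Φ(−δ/√(σ₁²/(w₁T) + σ₂²/(w₂T))) (where Φ is the standard normal CDF) has positive semidefinite Hessian on the positive orthant, i.e., g is convex in (w₁, w₂) for w₁, w₂ > 0. -/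
open Real MeasureTheory

lemma myConvexOn_congr {E : Type*} [AddCommMonoid E] [Module ℝ E] {s : Set E} {f g : E → ℝ}
    (hf : ConvexOn ℝ s f) (h : ∀ x ∈ s, f x = g x) : ConvexOn ℝ s g :=
  ⟨hf.1, fun x hx y hy a b ha hb hab => by
    rw [← h _ hx, ← h _ hy, ← h _ (hf.1 hx hy ha hb hab)]
    exact hf.2 hx hy ha hb hab⟩

lemma myConcaveComp {E : Type*} [AddCommMonoid E] [Module ℝ E] {s : Set E} {t : Set ℝ}
    {f : E → ℝ} {g : ℝ → ℝ} (hg : ConcaveOn ℝ t g) (hg' : MonotoneOn g t)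
    (hf : ConcaveOn ℝ s f) (hm : ∀ x ∈ s, f x ∈ t) :
    ConcaveOn ℝ s (fun x => g (f x)) :=
  ⟨hf.1, fun x hx y hy a b ha hb hab =>
    (hg.2 (hm _ hx) (hm _ hy) ha hb hab).trans <|
      hg' (hg.1 (hm _ hx) (hm _ hy) ha hb hab) (hm _ (hf.1 hx hy ha hb hab))
        (hf.2 hx hy ha hb hab)⟩

lemma myConvexComp {E : Type*} [AddCommMonoid E] [Module ℝ E] {s : Set E} {t : Set ℝ}
    {f : E → ℝ} {g : ℝ → ℝ} (hg : ConvexOn ℝ t g) (hg' : MonotoneOn g t)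
    (hf : ConvexOn ℝ s f) (hm : ∀ x ∈ s, f x ∈ t) :
    ConvexOn ℝ s (fun x => g (f x)) :=
  ⟨hf.1, fun x hx y hy a b ha hb hab =>
    (hg' (hm _ (hf.1 hx hy ha hb hab)) (hg.1 (hm _ hx) (hm _ hy) ha hb hab)
        (hf.2 hx hy ha hb hab)).trans <|
      hg.2 (hm _ hx) (hm _ hy) ha hb hab⟩
open Real MeasureTheory

lemma pos_comb {lam mu x y : ℝ} (hlam : 0 ≤ lam) (hmu : 0 ≤ mu) (hsum : lam + mu = 1)
    (hx : 0 < x) (hy : 0 < y) : 0 < lam * x + mu * y := by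
  rcases eq_or_lt_of_le hlam with h | h
  · have : mu = 1 := by linarith
    simp [← h, this, hy]
  · calc (0:ℝ) < lam * x := mul_pos h hx
    _ ≤ lam * x + mu * y := le_add_of_nonneg_right (mul_nonneg hmu hy.le)

lemma harm {a b : ℝ} (ha : 0 < a) (hb : 0 < b) :
    ConcaveOn ℝ {p : ℝ × ℝ | 0 < p.1 ∧ 0 < p.2} (fun p => (a / p.1 + b / p.2)⁻¹) := by
  have hS : {p : ℝ × ℝ | 0 < p.1 ∧ 0 < p.2} = (Set.Ioi 0) ×ˢ (Set.Ioi 0) := by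
    ext p; simp [Set.mem_prod, Set.mem_Ioi]
  constructor
  · rw [hS]; exact (convex_Ioi 0).prod (convex_Ioi 0)
  · rintro ⟨x₁, y₁⟩ ⟨hx₁, hy₁⟩ ⟨x₂, y₂⟩ ⟨hx₂, hy₂⟩ lam mu hlam hmu hsum
    simp only [Prod.smul_mk, Prod.mk_add_mk, smul_eq_mul]
    have hX : 0 < lam * x₁ + mu * x₂ := pos_comb hlam hmu hsum hx₁ hx₂
    have hY : 0 < lam * y₁ + mu * y₂ := pos_comb hlam hmu hsum hy₁ hy₂
    have key : ∀ x y : ℝ, 0 < x → 0 < y → (a / x + b / y)⁻¹ = x * y / (a * y + b * x) := by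
      intro x y hx hy
      have h1 : 0 < a * y + b * x := by positivity
      field_simp
    rw [key _ _ hx₁ hy₁, key _ _ hx₂ hy₂, key _ _ hX hY]
    dsimp only
    have h1 : 0 < a * y₁ + b * x₁ := by positivity
    have h2 : 0 < a * y₂ + b * x₂ := by positivity
    have h3 : 0 < a * (lam * y₁ + mu * y₂) + b * (lam * x₁ + mu * x₂) := by positivity
    rw [mul_div_assoc', mul_div_assoc', div_add_div _ _ h1.ne' h2.ne',
      div_le_div_iff₀ (by positivity) h3]
    nlinarith [sq_nonneg (x₁ * y₂ - x₂ * y₁), mul_pos ha hb, mul_nonneg hlam hmu,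
      mul_pos hx₁ hy₂, mul_pos hx₂ hy₁, sq_nonneg (lam * mu),
      mul_nonneg (mul_nonneg hlam hmu) (sq_nonneg (x₁ * y₂ - x₂ * y₁)),
      mul_nonneg (mul_nonneg (mul_nonneg hlam hmu) (mul_pos ha hb).le) (sq_nonneg (x₁ * y₂ - x₂ * y₁))]
open Real MeasureTheory

noncomputable def stdNormalCDF (x : ℝ) : ℝ :=
  ∫ t in Set.Iic x, (Real.sqrt (2 * Real.pi))⁻¹ * Real.exp (-t^2 / 2)

lemma phi_integrable :
    Integrable (fun t : ℝ => (Real.sqrt (2 * Real.pi))⁻¹ * Real.exp (-t^2 / 2)) := by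
  have h : ∀ t : ℝ, -t^2/2 = -(1/2 : ℝ) * t^2 := fun t => by ring
  simp_rw [h]
  exact (integrable_exp_neg_mul_sq (by norm_num)).const_mul _

lemma phi_cont : Continuous (fun t : ℝ => (Real.sqrt (2 * Real.pi))⁻¹ * Real.exp (-t^2 / 2)) := by
  fun_prop

lemma stdNormalCDF_hasDerivAt (x : ℝ) :
    HasDerivAt stdNormalCDF ((Real.sqrt (2 * Real.pi))⁻¹ * Real.exp (-x^2 / 2)) x := by
  set φ : ℝ → ℝ := fun t : ℝ => (Real.sqrt (2 * Real.pi))⁻¹ * Real.exp (-t^2 / 2) with hφ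
  have key : stdNormalCDF = fun u => stdNormalCDF 0 + ∫ t in (0:ℝ)..u, φ t := by
    funext u
    have := intervalIntegral.integral_Iic_sub_Iic (f := φ) (μ := volume) (a := 0) (b := u)
      phi_integrable.integrableOn phi_integrable.integrableOn
    unfold stdNormalCDF
    rw [← this]
    ring
  rw [key]
  exact ((intervalIntegral.integral_hasDerivAt_right
    (phi_integrable.intervalIntegrable)
    phi_cont.aestronglyMeasurable.stronglyMeasurableAtFilter
    phi_cont.continuousAt)).const_add _

lemma stdNormalCDF_mono : Monotone stdNormalCDF := by
  intro a b hab
  exact setIntegral_mono_set phi_integrable.integrableOn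
    (Filter.Eventually.of_forall fun t => by positivity)
    (HasSubset.Subset.eventuallyLE (Set.Iic_subset_Iic.2 hab))

lemma stdNormalCDF_convexOn : ConvexOn ℝ (Set.Iic (0:ℝ)) stdNormalCDF := by
  apply MonotoneOn.convexOn_of_deriv (convex_Iic 0)
  · exact fun x _ => ((stdNormalCDF_hasDerivAt x).continuousAt).continuousWithinAt
  · exact fun x _ => ((stdNormalCDF_hasDerivAt x).differentiableAt).differentiableWithinAt
  · intro x hx y hy hxy
    rw [(stdNormalCDF_hasDerivAt x).deriv, (stdNormalCDF_hasDerivAt y).deriv]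
    rw [interior_Iic, Set.mem_Iio] at hx hy
    have : -x^2/2 ≤ -y^2/2 := by nlinarith
    have h2 : (0:ℝ) ≤ (Real.sqrt (2 * Real.pi))⁻¹ := by positivity
    exact mul_le_mul_of_nonneg_left (Real.exp_le_exp.2 this) h2
open Real MeasureTheory

theorem apcs_convexity (δ σ₁ σ₂ T : ℝ)
    (hδ : 0 < δ) (hσ₁ : 0 < σ₁) (hσ₂ : 0 < σ₂) (hT : 0 < T) :
    (∀ w₁ w₂ : ℝ, 0 < w₁ → 0 < w₂ → ∀ a₁ a₂ : ℝ,
      0 ≤ (1 / ((σ₁^2 / (w₁ * T) + σ₂^2 / (w₂ * T)) * T)) *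
            ((1/2) * δ^2 / (σ₁^2 / (w₁ * T) + σ₂^2 / (w₂ * T)) + 1/2) *
            (σ₁^2 * a₁ / w₁^2 + σ₂^2 * a₂ / w₂^2)^2 +
          (2 / ((σ₁^2 / (w₁ * T) + σ₂^2 / (w₂ * T)) * T)) *
            (σ₁^2 * σ₂^2 / (w₁ * w₂)) * (a₁ / w₁ - a₂ / w₂)^2) ∧
    ConvexOn ℝ {p : ℝ × ℝ | 0 < p.1 ∧ 0 < p.2}
      (fun p => stdNormalCDF (-δ / Real.sqrt (σ₁^2 / (p.1 * T) + σ₂^2 / (p.2 * T)))) := by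
  constructor
  · intro w₁ w₂ hw₁ hw₂ a₁ a₂
    positivity
  · set S : Set (ℝ × ℝ) := {p : ℝ × ℝ | 0 < p.1 ∧ 0 < p.2} with hSdef
    set a : ℝ := σ₁^2 / T with hadef
    set b : ℝ := σ₂^2 / T with hbdef
    have ha : 0 < a := by positivity
    have hb : 0 < b := by positivity
    -- the harmonic-mean function is concave and positive on S
    have hharm := harm ha hb
    have hpos : ∀ p : ℝ × ℝ, p ∈ S → 0 < (a / p.1 + b / p.2)⁻¹ := by
      rintro ⟨x, y⟩ ⟨hx, hy⟩
      have : 0 < a / x + b / y := by positivity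
      positivity
    -- sqrt of harmonic mean is concave
    have hsqrt : ConcaveOn ℝ S (fun p => Real.sqrt ((a / p.1 + b / p.2)⁻¹)) := by
      refine myConcaveComp (Real.strictConcaveOn_sqrt.concaveOn) ?_ hharm
        (fun p hp => (hpos p hp).le)
      intro u hu v hv huv
      exact Real.sqrt_le_sqrt huv
    -- hence the inner map is convex
    have hm : ConvexOn ℝ S (fun p => -(δ * Real.sqrt ((a / p.1 + b / p.2)⁻¹))) := by
      have h1 : ConvexOn ℝ S (fun p => -Real.sqrt ((a / p.1 + b / p.2)⁻¹)) := hsqrt.neg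
      have h2 := h1.smul hδ.le
      refine myConvexOn_congr h2 ?_
      intro p _
      simp [smul_eq_mul]
    -- compose with the CDF
    have hcomp : ConvexOn ℝ S
        (fun p => stdNormalCDF (-(δ * Real.sqrt ((a / p.1 + b / p.2)⁻¹)))) := by
      refine myConvexComp stdNormalCDF_convexOn (stdNormalCDF_mono.monotoneOn _) hm ?_
      intro p hp
      have : 0 ≤ Real.sqrt ((a / p.1 + b / p.2)⁻¹) := Real.sqrt_nonneg _
      have : 0 ≤ δ * Real.sqrt ((a / p.1 + b / p.2)⁻¹) := by positivity
      simpa using neg_nonpos.2 this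
    refine myConvexOn_congr hcomp ?_
    rintro ⟨x, y⟩ ⟨hx, hy⟩
    have hu : (0:ℝ) < a / x + b / y := by positivity
    have hrw : σ₁^2 / (x * T) + σ₂^2 / (y * T) = a / x + b / y := by
      rw [hadef, hbdef, div_div, div_div, mul_comm T x, mul_comm T y]
    dsimp only
    rw [hrw, Real.sqrt_inv, ← div_eq_mul_inv, neg_div]
end

section
/- Let S > 0, I_i > 0 for i in a finite nonempty set K', and let λ(T) be any function of T > 0 such that ∑_{i∈K'} I_i·(λ(T) − 2·log I_i)/(T+S) + σ_b·√(∑_{i∈K'} I_i²·(λ(T) − 2·log I_i)²/(σᵢ²·(T+S)²)) = 1 for all T (the normalization constraint), with λ(T) − 2·log I_i ≥ 0 for all i. Define α_i(T) = (λ(T) − 2·log I_i)/(1 + T/S). Suppose additionally that wᵢ* = I_i/S satisfies ∑_{i∈K'} wᵢ* + σ_b·√(∑_{i∈K'} (wᵢ*)²/σᵢ²) = 1. Then α_i(T) → 1 as T → ∞ for every i ∈ K'. -/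
/-!
The left-hand side `N` of the normalization constraint is monotone and positively homogeneous
on nonnegative vectors, and the hypothesis on `wᵢ* = Iᵢ / S` says that `N` takes the value `S`
at the constant vector `1`. Writing `αᵢ(T) = S uᵢ(T)` with `uᵢ(T) = (λ(T) - 2 log Iᵢ) / (T + S)`,
the coordinates of `u(T)` differ pairwise by `O(1/T)`; squeezing `u(T)` between two constant
vectors `uᵢ(T) ± O(1/T)` in `N(u(T)) = 1` gives `αᵢ(T) = 1 + O(1/T)`.
-/

open Filter Topology

section BudgetNorm

variable {ι : Type*} (K : Finset ι) (I σ : ι → ℝ) (σb : ℝ)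

/-- With `u j = W j / I j`, the budget constraint on the allocation `W` reads `budgetNorm u = 1`. -/
noncomputable def budgetNorm (u : ι → ℝ) : ℝ :=
  ∑ j ∈ K, I j * u j + σb * Real.sqrt (∑ j ∈ K, (I j)^2 * (u j)^2 / (σ j)^2)

theorem budgetNorm_const {y : ℝ} (hy : 0 ≤ y) :
    budgetNorm K I σ σb (fun _ => y) = y * budgetNorm K I σ σb (fun _ => 1) := by
  have hlin : ∑ j ∈ K, I j * y = y * ∑ j ∈ K, I j * 1 := by
    rw [Finset.mul_sum]
    exact Finset.sum_congr rfl fun j _ => by ring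
  have hsq : ∑ j ∈ K, (I j)^2 * y^2 / (σ j)^2 = y^2 * ∑ j ∈ K, (I j)^2 * 1^2 / (σ j)^2 := by
    rw [Finset.mul_sum]
    exact Finset.sum_congr rfl fun j _ => by ring
  rw [budgetNorm, budgetNorm, hlin, hsq, Real.sqrt_mul (sq_nonneg y), Real.sqrt_sq hy]
  ring

variable {K I σ σb}

theorem budgetNorm_mono (hI : ∀ j ∈ K, 0 ≤ I j) (hσb : 0 ≤ σb) {u v : ι → ℝ}
    (hu : ∀ j ∈ K, 0 ≤ u j) (huv : ∀ j ∈ K, u j ≤ v j) :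
    budgetNorm K I σ σb u ≤ budgetNorm K I σ σb v := by
  have hlin : ∑ j ∈ K, I j * u j ≤ ∑ j ∈ K, I j * v j :=
    Finset.sum_le_sum fun j hj => mul_le_mul_of_nonneg_left (huv j hj) (hI j hj)
  have hquad : ∑ j ∈ K, (I j)^2 * (u j)^2 / (σ j)^2 ≤ ∑ j ∈ K, (I j)^2 * (v j)^2 / (σ j)^2 :=
    Finset.sum_le_sum fun j hj => by
      have huj := hu j hj
      have hvj := huv j hj
      gcongr
  exact add_le_add hlin (mul_le_mul_of_nonneg_left (Real.sqrt_le_sqrt hquad) hσb)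

theorem budgetNorm_one_nonneg (hI : ∀ j ∈ K, 0 ≤ I j) (hσb : 0 ≤ σb) :
    0 ≤ budgetNorm K I σ σb (fun _ => 1) := by
  have h := budgetNorm_mono (σ := σ) hI hσb (u := fun _ => 0) (v := fun _ => 1)
    (fun _ _ => le_rfl) (fun _ _ => zero_le_one)
  rwa [budgetNorm_const K I σ σb le_rfl, zero_mul] at h

/-- Squeeze `u` between the constant vectors `max (u i - δ) 0` and `u i + δ`. -/
theorem abs_budgetNorm_one_mul_sub_le (hI : ∀ j ∈ K, 0 ≤ I j) (hσb : 0 ≤ σb) {u : ι → ℝ}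
    (hu : ∀ j ∈ K, 0 ≤ u j) {i : ι} (hi : i ∈ K) {δ : ℝ} (hδ : ∀ j ∈ K, |u i - u j| ≤ δ) :
    |budgetNorm K I σ σb (fun _ => 1) * u i - budgetNorm K I σ σb u| ≤
      budgetNorm K I σ σb (fun _ => 1) * δ := by
  set C := budgetNorm K I σ σb (fun _ => 1)
  have hC : 0 ≤ C := budgetNorm_one_nonneg hI hσb
  have hupper : budgetNorm K I σ σb u ≤ (u i + δ) * C := by
    have hnn : 0 ≤ u i + δ := add_nonneg (hu i hi) ((abs_nonneg _).trans (hδ i hi))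
    rw [← budgetNorm_const K I σ σb hnn]
    exact budgetNorm_mono hI hσb hu fun j hj => by linarith [(abs_le.mp (hδ j hj)).1]
  have hlower : max (u i - δ) 0 * C ≤ budgetNorm K I σ σb u := by
    rw [← budgetNorm_const K I σ σb (le_max_right _ _)]
    exact budgetNorm_mono hI hσb (fun _ _ => le_max_right _ _)
      fun j hj => max_le (by linarith [(abs_le.mp (hδ j hj)).2]) (hu j hj)
  have hmax : (u i - δ) * C ≤ max (u i - δ) 0 * C :=
    mul_le_mul_of_nonneg_right (le_max_left _ _) hC
  rw [abs_le]
  constructor <;> nlinarith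

theorem budgetNorm_div (v : ι → ℝ) (t : ℝ) :
    budgetNorm K I σ σb (fun j => v j / t) =
      ∑ j ∈ K, I j * v j / t + σb * Real.sqrt (∑ j ∈ K, (I j)^2 * (v j)^2 / ((σ j)^2 * t^2)) := by
  have hlin : ∑ j ∈ K, I j * (v j / t) = ∑ j ∈ K, I j * v j / t :=
    Finset.sum_congr rfl fun j _ => (mul_div_assoc _ _ _).symm
  have hquad : ∑ j ∈ K, (I j)^2 * (v j / t)^2 / (σ j)^2 =
      ∑ j ∈ K, (I j)^2 * (v j)^2 / ((σ j)^2 * t^2) :=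
    Finset.sum_congr rfl fun j _ => by rw [div_pow, mul_div_assoc', div_div, mul_comm (t^2)]
  rw [budgetNorm, hlin, hquad]

end BudgetNorm

theorem abs_div_sub_div_le_sum {ι : Type*} {K : Finset ι} (c : ι → ℝ) (l : ℝ) {t : ℝ}
    (ht : 0 < t) (i : ι) {j : ι} (hj : j ∈ K) :
    |(l - c i) / t - (l - c j) / t| ≤ (∑ k ∈ K, |c k - c i|) / t := by
  rw [← sub_div, sub_sub_sub_cancel_left, abs_div, abs_of_pos ht]
  exact div_le_div_of_nonneg_right
    (Finset.single_le_sum (f := fun k => |c k - c i|) (fun _ _ => abs_nonneg _) hj) ht.le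

theorem alpha_tendsto_one_general {ι : Type*} (K' : Finset ι)
    (I σ : ι → ℝ) (σb S : ℝ) (lam : ℝ → ℝ)
    (hI : ∀ i ∈ K', 0 < I i) (hσb : 0 < σb) (hS : 0 < S)
    (hnorm : ∀ T > 0,
      ∑ i ∈ K', I i * (lam T - 2 * Real.log (I i)) / (T + S) +
        σb * Real.sqrt (∑ i ∈ K',
          (I i)^2 * (lam T - 2 * Real.log (I i))^2 / ((σ i)^2 * (T + S)^2)) = 1)
    (hfeas : ∀ T > 0, ∀ i ∈ K', 0 ≤ lam T - 2 * Real.log (I i))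
    (hstar : ∑ i ∈ K', I i / S +
      σb * Real.sqrt (∑ i ∈ K', (I i / S)^2 / (σ i)^2) = 1) :
    ∀ i ∈ K',
      Tendsto (fun T : ℝ => (lam T - 2 * Real.log (I i)) / (1 + T / S))
        atTop (nhds 1) := by
  intro i hi
  have hC : budgetNorm K' I σ σb (fun _ => 1) = S := by
    have h : budgetNorm K' I σ σb (fun _ => S⁻¹) = 1 := by
      have hquad : ∑ j ∈ K', (I j)^2 * S⁻¹^2 / (σ j)^2 = ∑ j ∈ K', (I j / S)^2 / (σ j)^2 :=
        Finset.sum_congr rfl fun j _ => by ring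
      rw [← hstar, budgetNorm, hquad]
      rfl
    rwa [budgetNorm_const K' I σ σb (inv_nonneg.mpr hS.le), inv_mul_eq_one₀ hS.ne', eq_comm] at h
  set c : ι → ℝ := fun j => 2 * Real.log (I j)
  set D := ∑ k ∈ K', |c k - c i|
  have hbound : ∀ T > 0, |(lam T - c i) / (1 + T / S) - 1| ≤ S * (D / (T + S)) := by
    intro T hT
    have hTS : 0 < T + S := by linarith
    have h := abs_budgetNorm_one_mul_sub_le (σ := σ) (fun j hj => (hI j hj).le) hσb.le
      (fun j hj => div_nonneg (hfeas T hT j hj) hTS.le) hi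
      (fun j hj => abs_div_sub_div_le_sum c (lam T) hTS i hj)
    have hα : (lam T - c i) / (1 + T / S) = S * ((lam T - c i) / (T + S)) := by
      field_simp
      ring
    rwa [hC, budgetNorm_div, hnorm T hT, ← hα] at h
  have hD : Tendsto (fun T : ℝ => S * (D / (T + S))) atTop (𝓝 0) := by
    simpa using (tendsto_const_nhds.div_atTop
      (tendsto_atTop_add_const_right _ S tendsto_id)).const_mul S
  rw [tendsto_iff_norm_sub_tendsto_zero]
  exact squeeze_zero_norm' ((eventually_gt_atTop 0).mono fun T hT => by
    simpa using hbound T hT) hD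

theorem alpha_tendsto_one {ι : Type*} (K' : Finset ι) (hK' : K'.Nonempty)
    (I σ : ι → ℝ) (σb S : ℝ) (lam : ℝ → ℝ)
    (hI : ∀ i ∈ K', 0 < I i) (hσ : ∀ i ∈ K', 0 < σ i) (hσb : 0 < σb) (hS : 0 < S)
    (hnorm : ∀ T > 0,
      ∑ i ∈ K', I i * (lam T - 2 * Real.log (I i)) / (T + S) +
        σb * Real.sqrt (∑ i ∈ K',
          (I i)^2 * (lam T - 2 * Real.log (I i))^2 / ((σ i)^2 * (T + S)^2)) = 1)
    (hfeas : ∀ T > 0, ∀ i ∈ K', 0 ≤ lam T - 2 * Real.log (I i))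
    (hstar : ∑ i ∈ K', I i / S +
      σb * Real.sqrt (∑ i ∈ K', (I i / S)^2 / (σ i)^2) = 1) :
    ∀ i ∈ K',
      Tendsto (fun T : ℝ => (lam T - 2 * Real.log (I i)) / (1 + T / S))
        atTop (nhds 1) :=
  alpha_tendsto_one_general K' I σ σb S lam hI hσb hS hnorm hfeas hstar
end
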